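/- arXiv:2410.07729 — 2 statements merged into one kernel-verified Lean document; each statement's English description precedes it below -/
import Mathlib

section
/- Let n ≥ 2 be an integer and c a nonzero real number, with n odd or (n even and c < 0), and let k be a natural number with 1 ≤ k ≤ ⌊n/2⌋. Then the function g : ℂ → ℂ defined by g(x) = ∫₀^∞ e^{-(-c)^{n-1} w^n/n - c w x a_k} cos(c w x b_k - 2kπ/n) dw satisfies the Scorer-type equation g^{(n-1)}(x) + c·x·g(x) = 1 for every x ∈ ℂ. -/
/-!
Put `A = (-c)^(n-1) > 0` and `F(y) = ∫₀^∞ exp(-A wⁿ/n - c w y) dw`. Differentiating under the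
integral sign, `F` is entire with `F⁽ʲ⁾(y) = ∫₀^∞ (-c w)ʲ exp(-A wⁿ/n - c w y) dw`, and integrating
`d/dw exp(-A wⁿ/n - c w y) = -((-c w)ⁿ⁻¹ + c y) exp(-A wⁿ/n - c w y)` over `(0, ∞)` gives
`F⁽ⁿ⁻¹⁾(y) + c y F(y) = 1`. Expanding the cosine into exponentials,
`g(x) = (ω⁻¹ F(ω⁻¹ x) + ω F(ω x)) / 2` with `ω = e^{2πik/n}`. As `ωⁿ = 1`, each `x ↦ ω F(ω x)`
solves the same equation, and hence so does their average `g`.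
-/

open MeasureTheory Real Set Filter Topology
open Complex (I)

lemma eventually_pow_mul_exp_le_exp_neg {n : ℕ} (hn : 2 ≤ n) {A : ℝ} (hA : 0 < A) (m : ℕ)
    (B : ℝ) : ∀ᶠ w in atTop, w ^ m * rexp (-A * w ^ n / n + B * w) ≤ rexp (-w) := by
  filter_upwards [eventually_ge_atTop 1, eventually_ge_atTop (n * (B + m + 1) / A)]
    with w hw1 hwB
  have hpow : w ^ m ≤ rexp (m * w) := by
    rw [exp_nat_mul]
    exact pow_le_pow_left₀ (by positivity) (by linarith [add_one_le_exp w]) m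
  have hlin : (B + m + 1) * w ≤ A * w ^ n / n := by
    have hB : B + m + 1 ≤ A * w / n := by
      rw [le_div_iff₀ (by positivity)]
      rw [div_le_iff₀ hA] at hwB
      linarith
    calc (B + m + 1) * w ≤ A * w / n * w := by gcongr
      _ = A * w ^ 2 / n := by ring
      _ ≤ A * w ^ n / n := by gcongr
  calc w ^ m * rexp (-A * w ^ n / n + B * w)
      ≤ rexp (m * w) * rexp (-A * w ^ n / n + B * w) := by gcongr
    _ = rexp (m * w + (-A * w ^ n / n + B * w)) := (exp_add _ _).symm
    _ ≤ rexp (-w) := exp_le_exp.mpr (by rw [neg_mul, neg_div]; linarith)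

lemma integrableOn_pow_mul_exp {n : ℕ} (hn : 2 ≤ n) {A : ℝ} (hA : 0 < A) (m : ℕ) (B : ℝ) :
    IntegrableOn (fun w : ℝ => w ^ m * rexp (-A * w ^ n / n + B * w)) (Ioi 0) := by
  refine integrable_of_isBigO_exp_neg one_pos (by fun_prop) (Asymptotics.IsBigO.of_bound 1 ?_)
  filter_upwards [eventually_pow_mul_exp_le_exp_neg hn hA m B, eventually_ge_atTop 0]
    with w hw hw0
  rw [Real.norm_of_nonneg (by positivity), Real.norm_of_nonneg (exp_pos _).le]
  simpa using hw

noncomputable def scorerKernel (n : ℕ) (A c : ℝ) (y : ℂ) (w : ℝ) : ℂ :=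
  Complex.exp (-(A : ℂ) * (w : ℂ) ^ n / n - c * w * y)

/-- The `m`-th derivative of `scorerIntegral n A c 0`, see `iteratedDeriv_scorerIntegral`. -/
noncomputable def scorerIntegral (n : ℕ) (A c : ℝ) (m : ℕ) (y : ℂ) : ℂ :=
  ∫ w in Ioi (0 : ℝ), (-c * w : ℂ) ^ m * scorerKernel n A c y w

section

variable {n : ℕ} {A : ℝ} (c : ℝ)

lemma scorerIntegral_zero (y : ℂ) :
    scorerIntegral n A c 0 y = ∫ w in Ioi (0 : ℝ), scorerKernel n A c y w := by
  simp only [scorerIntegral, pow_zero, one_mul]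

lemma norm_scorerKernel (y : ℂ) (w : ℝ) :
    ‖scorerKernel n A c y w‖ = rexp (-A * w ^ n / n + (-c * y.re) * w) := by
  have hsplit : -(A : ℂ) * (w : ℂ) ^ n / n - c * w * y
      = ((-A * w ^ n / n : ℝ) : ℂ) - ((c * w : ℝ) : ℂ) * y := by
    push_cast; ring
  rw [scorerKernel, Complex.norm_exp, hsplit, Complex.sub_re, Complex.ofReal_re,
    Complex.re_ofReal_mul]
  congr 1
  ring

lemma norm_scorerIntegrand (m : ℕ) (y : ℂ) {w : ℝ} (hw : 0 ≤ w) :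
    ‖(-c * w : ℂ) ^ m * scorerKernel n A c y w‖
      = |c| ^ m * (w ^ m * rexp (-A * w ^ n / n + (-c * y.re) * w)) := by
  rw [norm_mul, norm_pow, norm_scorerKernel, norm_mul, norm_neg, Complex.norm_real,
    Complex.norm_real, Real.norm_eq_abs, Real.norm_of_nonneg hw, mul_pow, mul_assoc]

lemma continuous_scorerKernel (y : ℂ) : Continuous (scorerKernel n A c y) := by
  unfold scorerKernel; fun_prop

lemma hasDerivAt_scorerIntegrand (m : ℕ) (w : ℝ) (y : ℂ) :
    HasDerivAt (fun y => (-c * w : ℂ) ^ m * scorerKernel n A c y w)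
      ((-c * w : ℂ) ^ (m + 1) * scorerKernel n A c y w) y := by
  have harg : HasDerivAt (fun y : ℂ => -(A : ℂ) * (w : ℂ) ^ n / n - c * w * y) (-c * w) y := by
    simpa using ((hasDerivAt_id y).const_mul ((c : ℂ) * w)).const_sub (-(A : ℂ) * (w : ℂ) ^ n / n)
  exact (harg.cexp.const_mul _).congr_deriv (by rw [scorerKernel, pow_succ]; ring)

lemma hasDerivAt_scorerKernel (hn : n ≠ 0) (y : ℂ) (w : ℝ) :
    HasDerivAt (scorerKernel n A c y)
      (-(A * (w : ℂ) ^ (n - 1) + c * y) * scorerKernel n A c y w) w := by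
  have harg : HasDerivAt (fun z : ℂ => -(A : ℂ) * z ^ n / n - c * z * y)
      (-(A * (w : ℂ) ^ (n - 1) + c * y)) w := by
    refine ((((hasDerivAt_pow n (w : ℂ)).const_mul (-(A : ℂ))).div_const n).sub
      (((hasDerivAt_id (w : ℂ)).const_mul (c : ℂ)).mul_const y)).congr_deriv ?_
    field_simp
    ring
  exact harg.cexp.comp_ofReal.congr_deriv (mul_comm _ _)

variable (hn : 2 ≤ n) (hA : 0 < A)
include hn hA

lemma integrableOn_scorerIntegrand (m : ℕ) (y : ℂ) :
    IntegrableOn (fun w : ℝ => (-c * w : ℂ) ^ m * scorerKernel n A c y w) (Ioi 0) := by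
  have hcont : Continuous fun w : ℝ => (-c * w : ℂ) ^ m * scorerKernel n A c y w :=
    (by fun_prop : Continuous fun w : ℝ => (-c * w : ℂ) ^ m).mul (continuous_scorerKernel c y)
  refine Integrable.mono' ((integrableOn_pow_mul_exp hn hA m (-c * y.re)).const_mul (|c| ^ m))
    hcont.aestronglyMeasurable ?_
  rw [ae_restrict_iff' measurableSet_Ioi]
  exact Eventually.of_forall fun w hw => (norm_scorerIntegrand c m y (le_of_lt hw)).le

lemma hasDerivAt_scorerIntegral (m : ℕ) (y₀ : ℂ) :
    HasDerivAt (scorerIntegral n A c m) (scorerIntegral n A c (m + 1) y₀) y₀ := by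
  set B : ℝ := |c| * (|y₀.re| + 1)
  have hbound : ∀ y ∈ Metric.ball y₀ 1, -c * y.re ≤ B := fun y hy => by
    have hre : |y.re| ≤ |y₀.re| + 1 := by
      have := (Complex.abs_re_le_norm (y - y₀)).trans_lt (mem_ball_iff_norm.mp hy)
      rw [Complex.sub_re] at this
      linarith [abs_sub_abs_le_abs_sub y.re y₀.re]
    calc -c * y.re ≤ |c| * |y.re| := by rw [← abs_mul]; linarith [neg_abs_le (c * y.re)]
      _ ≤ B := mul_le_mul_of_nonneg_left hre (abs_nonneg c)
  refine (hasDerivAt_integral_of_dominated_loc_of_deriv_le (Metric.ball_mem_nhds y₀ one_pos)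
    (F := fun y w => (-c * w : ℂ) ^ m * scorerKernel n A c y w)
    (F' := fun y w => (-c * w : ℂ) ^ (m + 1) * scorerKernel n A c y w)
    (bound := fun w => |c| ^ (m + 1) * (w ^ (m + 1) * rexp (-A * w ^ n / n + B * w)))
    (Eventually.of_forall fun y => (integrableOn_scorerIntegrand c hn hA m y).aestronglyMeasurable)
    (integrableOn_scorerIntegrand c hn hA m y₀)
    (integrableOn_scorerIntegrand c hn hA (m + 1) y₀).aestronglyMeasurable ?_
    ((integrableOn_pow_mul_exp hn hA (m + 1) B).const_mul _)
    (Eventually.of_forall fun w y _ => hasDerivAt_scorerIntegrand c m w y)).2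
  rw [ae_restrict_iff' measurableSet_Ioi]
  refine Eventually.of_forall fun w (hw : 0 < w) y hy => ?_
  rw [norm_scorerIntegrand c (m + 1) y hw.le]
  have := hbound y hy
  gcongr

lemma iteratedDeriv_scorerIntegral (m : ℕ) :
    iteratedDeriv m (scorerIntegral n A c 0) = scorerIntegral n A c m := by
  induction m with
  | zero => exact iteratedDeriv_zero
  | succ m ih =>
    rw [iteratedDeriv_succ, ih]
    exact funext fun y => (hasDerivAt_scorerIntegral c hn hA m y).deriv

lemma differentiable_scorerIntegral (m : ℕ) : Differentiable ℂ (scorerIntegral n A c m) :=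
  fun y => (hasDerivAt_scorerIntegral c hn hA m y).differentiableAt

lemma tendsto_scorerKernel_atTop (y : ℂ) : Tendsto (scorerKernel n A c y) atTop (𝓝 0) := by
  rw [tendsto_zero_iff_norm_tendsto_zero]
  simp_rw [norm_scorerKernel]
  refine squeeze_zero' (Eventually.of_forall fun w => (exp_pos _).le) ?_
    (tendsto_exp_atBot.comp tendsto_neg_atTop_atBot)
  simpa using eventually_pow_mul_exp_le_exp_neg hn hA 0 (-c * y.re)

lemma scorerIntegral_pred_add_mul (hAc : (-c : ℂ) ^ (n - 1) = A) (y : ℂ) :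
    scorerIntegral n A c (n - 1) y + c * y * scorerIntegral n A c 0 y = 1 := by
  have hderiv : ∀ w ∈ Ici (0 : ℝ), HasDerivAt (scorerKernel n A c y)
      (-((-c * w : ℂ) ^ (n - 1) * scorerKernel n A c y w
        + c * y * ((-c * w : ℂ) ^ 0 * scorerKernel n A c y w))) w := fun w _ =>
    (hasDerivAt_scorerKernel c (by omega) y w).congr_deriv (by rw [mul_pow, hAc]; ring)
  have hFTC := integral_Ioi_of_hasDerivAt_of_tendsto' hderiv
    ((integrableOn_scorerIntegrand c hn hA _ y).add
      ((integrableOn_scorerIntegrand c hn hA 0 y).const_mul _)).neg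
    (tendsto_scorerKernel_atTop c hn hA y)
  rw [integral_neg, integral_add (integrableOn_scorerIntegrand c hn hA _ y)
    ((integrableOn_scorerIntegrand c hn hA 0 y).const_mul _), integral_const_mul] at hFTC
  have hK0 : scorerKernel n A c y 0 = 1 := by simp [scorerKernel, show n ≠ 0 by omega]
  rw [hK0] at hFTC
  unfold scorerIntegral
  linear_combination -hFTC

end

def SolvesScorerEq (m : ℕ) (a : ℂ) (F : ℂ → ℂ) : Prop :=
  ∀ y, iteratedDeriv m F y + a * y * F y = 1

lemma solvesScorerEq_scorerIntegral {n : ℕ} (hn : 2 ≤ n) {A : ℝ} (hA : 0 < A) {c : ℝ}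
    (hAc : (-c : ℂ) ^ (n - 1) = A) : SolvesScorerEq (n - 1) c (scorerIntegral n A c 0) :=
  fun y => by
    rw [iteratedDeriv_scorerIntegral c hn hA]
    exact scorerIntegral_pred_add_mul c hn hA hAc y

namespace SolvesScorerEq

variable {m : ℕ} {a : ℂ} {F G : ℂ → ℂ}

lemma comp_mul (h : SolvesScorerEq m a F) (hF : Differentiable ℂ F) {ω : ℂ}
    (hω : ω ^ (m + 1) = 1) : SolvesScorerEq m a (fun x => ω * F (ω * x)) := fun x => by
  rw [iteratedDeriv_const_mul_field, iteratedDeriv_comp_const_mul hF.contDiff]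
  linear_combination h (ω * x) + iteratedDeriv m F (ω * x) * hω

lemma mul_add_mul (hF : SolvesScorerEq m a F) (hG : SolvesScorerEq m a G)
    (hFd : Differentiable ℂ F) (hGd : Differentiable ℂ G) {s t : ℂ} (hst : s + t = 1) :
    SolvesScorerEq m a (fun x => s * F x + t * G x) := fun x => by
  rw [iteratedDeriv_fun_add (hFd.const_mul s).contDiff.contDiffAt
    (hGd.const_mul t).contDiff.contDiffAt, iteratedDeriv_const_mul_field,
    iteratedDeriv_const_mul_field]
  linear_combination s * hF x + t * hG x + hst

end SolvesScorerEq

lemma exp_sub_mul_cos_mul_cos_sub (a z : ℂ) (θ : ℝ) :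
    Complex.exp (a - z * (Real.cos θ : ℝ)) * Complex.cos (z * (Real.sin θ : ℝ) - (θ : ℝ)) =
      2⁻¹ * ((Complex.exp (θ * I))⁻¹ * Complex.exp (a - (Complex.exp (θ * I))⁻¹ * z))
      + 2⁻¹ * (Complex.exp (θ * I) * Complex.exp (a - Complex.exp (θ * I) * z)) := by
  have hcis : Complex.exp (θ * I) = Real.cos θ + Real.sin θ * I := by
    rw [Complex.exp_mul_I, ← Complex.ofReal_cos, ← Complex.ofReal_sin]
  have hcis' : Complex.exp (-(θ * I)) = Real.cos θ - Real.sin θ * I := by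
    rw [← neg_mul, Complex.exp_mul_I, Complex.cos_neg, Complex.sin_neg, ← Complex.ofReal_cos,
      ← Complex.ofReal_sin]
    ring
  have h1 : Complex.exp (a - z * (Real.cos θ : ℝ)) *
      Complex.exp ((z * (Real.sin θ : ℝ) - θ) * I) =
        Complex.exp (-(θ * I)) * Complex.exp (a - Complex.exp (-(θ * I)) * z) := by
    rw [← Complex.exp_add, ← Complex.exp_add, hcis']
    congr 1
    ring
  have h2 : Complex.exp (a - z * (Real.cos θ : ℝ)) *
      Complex.exp (-(z * (Real.sin θ : ℝ) - θ) * I) =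
        Complex.exp (θ * I) * Complex.exp (a - Complex.exp (θ * I) * z) := by
    rw [← Complex.exp_add, ← Complex.exp_add, hcis]
    congr 1
    ring
  rw [← Complex.exp_neg, Complex.cos]
  linear_combination 2⁻¹ * h1 + 2⁻¹ * h2

lemma integral_exp_mul_cos_eq_scorerIntegral {n : ℕ} (hn : 2 ≤ n) {A : ℝ} (hA : 0 < A)
    (c θ : ℝ) (x : ℂ) :
    ∫ w in Ioi (0 : ℝ), Complex.exp (-(A : ℂ) * (w : ℂ) ^ n / n - c * w * x * (Real.cos θ : ℝ)) *
        Complex.cos (c * w * x * (Real.sin θ : ℝ) - (θ : ℝ)) =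
      2⁻¹ * ((Complex.exp (θ * I))⁻¹ * scorerIntegral n A c 0 ((Complex.exp (θ * I))⁻¹ * x))
      + 2⁻¹ * (Complex.exp (θ * I) * scorerIntegral n A c 0 (Complex.exp (θ * I) * x)) := by
  have hK (y : ℂ) : IntegrableOn (scorerKernel n A c y) (Ioi 0) := by
    simpa using integrableOn_scorerIntegrand c hn hA 0 y
  have hrot (ζ : ℂ) (w : ℝ) : ζ * (c * w * x) = c * w * (ζ * x) := by ring
  simp_rw [exp_sub_mul_cos_mul_cos_sub, hrot, scorerIntegral_zero, ← integral_const_mul]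
  exact integral_add (((hK _).const_mul _).const_mul _) (((hK _).const_mul _).const_mul _)

lemma exp_two_pi_mul_div_mul_I_pow_self (k : ℕ) {n : ℕ} (hn : n ≠ 0) :
    Complex.exp (((2 * k * π / n : ℝ) : ℂ) * I) ^ n = 1 := by
  rw [← Complex.exp_nat_mul, ← Complex.exp_nat_mul_two_pi_mul_I k]
  congr 1
  push_cast
  field_simp

lemma neg_pow_pred_pos {n : ℕ} {c : ℝ} (hc : c ≠ 0) (h : Odd n ∨ Even n ∧ c < 0) :
    0 < (-c) ^ (n - 1) := by
  rcases h with hodd | ⟨-, hneg⟩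
  · exact (Nat.Odd.sub_odd hodd odd_one).pow_pos (neg_ne_zero.mpr hc)
  · exact pow_pos (neg_pos.mpr hneg) _

theorem scorer_type_equation_g_general
    (n : ℕ) (hn : 2 ≤ n) (c : ℝ) (hc : c ≠ 0)
    (hcase : Odd n ∨ (Even n ∧ c < 0))
    (k : ℕ)
    (g : ℂ → ℂ)
    (hg : ∀ x : ℂ, g x =
      ∫ w in Ioi (0 : ℝ),
        Complex.exp (-(-(c : ℂ)) ^ (n - 1) * (w : ℂ) ^ n / n
            - (c : ℂ) * w * x * (Real.cos (2 * k * π / n) : ℝ)) *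
          Complex.cos ((c : ℂ) * w * x * (Real.sin (2 * k * π / n) : ℝ)
            - (2 * k * π / n : ℝ))) :
    ∀ x : ℂ, iteratedDeriv (n - 1) g x + (c : ℂ) * x * g x = 1 := by
  have hA := neg_pow_pred_pos hc hcase
  have hAc : (-c : ℂ) ^ (n - 1) = ((-c) ^ (n - 1) : ℝ) := by push_cast; ring
  set ω := Complex.exp (((2 * k * π / n : ℝ) : ℂ) * I)
  have hω : ω ^ (n - 1 + 1) = 1 := by
    rw [Nat.sub_add_cancel (by omega)]
    exact exp_two_pi_mul_div_mul_I_pow_self k (by omega)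
  have hω' : ω⁻¹ ^ (n - 1 + 1) = 1 := by rw [inv_pow, hω, inv_one]
  set F := scorerIntegral n ((-c) ^ (n - 1)) c 0
  have hF : SolvesScorerEq (n - 1) c F := solvesScorerEq_scorerIntegral hn hA hAc
  have hFd : Differentiable ℂ F := differentiable_scorerIntegral c hn hA 0
  have hg' : g = fun x => 2⁻¹ * (ω⁻¹ * F (ω⁻¹ * x)) + 2⁻¹ * (ω * F (ω * x)) :=
    funext fun x => by rw [hg, hAc]; exact integral_exp_mul_cos_eq_scorerIntegral hn hA c _ x
  rw [hg']
  exact (hF.comp_mul hFd hω').mul_add_mul (hF.comp_mul hFd hω) (by fun_prop) (by fun_prop)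
    (by norm_num)

theorem scorer_type_equation_g
    (n : ℕ) (hn : 2 ≤ n) (c : ℝ) (hc : c ≠ 0)
    (hcase : Odd n ∨ (Even n ∧ c < 0))
    (k : ℕ) (hk1 : 1 ≤ k) (hk2 : k ≤ n / 2)
    (g : ℂ → ℂ)
    (hg : ∀ x : ℂ, g x =
      ∫ w in Ioi (0 : ℝ),
        Complex.exp (-(-(c : ℂ)) ^ (n - 1) * (w : ℂ) ^ n / n
            - (c : ℂ) * w * x * (Real.cos (2 * k * π / n) : ℝ)) *
          Complex.cos ((c : ℂ) * w * x * (Real.sin (2 * k * π / n) : ℝ)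
            - (2 * k * π / n : ℝ))) :
    ∀ x : ℂ, iteratedDeriv (n - 1) g x + (c : ℂ) * x * g x = 1 :=
  scorer_type_equation_g_general n hn c hc hcase k g hg
end

section
/- Let n, m ≥ 2 be integers and c_n, c_m nonzero real numbers. Let f, g : ℝ → ℝ be Schwartz functions satisfying f^{(n-1)}(x) + c_n·x·f(x) = 0 and g^{(m-1)}(x) + c_m·x·g(x) = 0 for every x ∈ ℝ. Then their convolution h(x) = ∫_ℝ f(x - w) g(w) dw satisfies c_m·h^{(n-1)}(x) + c_n·h^{(m-1)}(x) + c_n·c_m·x·h(x) = 0 for every x ∈ ℝ. -/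
/-!
Differentiating under the integral sign (legitimate since Schwartz functions and their derivatives
are bounded and integrable), `h^{(n-1)} = f^{(n-1)} * g` and, by commutativity of convolution,
`h^{(m-1)} = f * g^{(m-1)}`. Substituting the two equations turns
`c_m h^{(n-1)}(x) + c_n h^{(m-1)}(x)` into `-c_n c_m ∫ ((x - w) + w) f(x - w) g(w) dw = -c_n c_m x h(x)`.
-/

open MeasureTheory

theorem integral_comp_sub_mul_comm (φ ψ : ℝ → ℝ) (x : ℝ) :
    ∫ w, φ (x - w) * ψ w = ∫ w, ψ (x - w) * φ w := by
  rw [← integral_sub_left_eq_self _ volume x]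
  simp only [sub_sub_cancel, mul_comm]

namespace SchwartzMap

theorem coe_derivCLM_iterate (k : ℕ) (φ : 𝓢(ℝ, ℝ)) :
    ⇑((derivCLM ℝ ℝ)^[k] φ) = iteratedDeriv k φ := by
  induction k with
  | zero => rfl
  | succ k ih =>
    ext x
    rw [Function.iterate_succ_apply', derivCLM_apply, ih, iteratedDeriv_succ]

variable {ψ : ℝ → ℝ}

theorem integrable_comp_sub_mul (φ : 𝓢(ℝ, ℝ)) (hψ : Integrable ψ) (x : ℝ) :
    Integrable fun w => φ (x - w) * ψ w :=
  hψ.bdd_mul (φ.continuous.comp (continuous_const.sub continuous_id)).aestronglyMeasurable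
    (.of_forall fun w => φ.norm_le_seminorm ℝ (x - w))

theorem integrable_iteratedDeriv_comp_sub_mul (φ : 𝓢(ℝ, ℝ)) (hψ : Integrable ψ) (k : ℕ)
    (x : ℝ) : Integrable fun w => iteratedDeriv k φ (x - w) * ψ w :=
  coe_derivCLM_iterate k φ ▸ integrable_comp_sub_mul _ hψ x

theorem hasDerivAt_integral_comp_sub_mul (φ : 𝓢(ℝ, ℝ)) (hψ : Integrable ψ) (x : ℝ) :
    HasDerivAt (fun x => ∫ w, φ (x - w) * ψ w) (∫ w, derivCLM ℝ ℝ φ (x - w) * ψ w) x := by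
  set C := SchwartzMap.seminorm ℝ 0 0 (derivCLM ℝ ℝ φ)
  refine (hasDerivAt_integral_of_dominated_loc_of_deriv_le (F' := fun x w => derivCLM ℝ ℝ φ (x - w) * ψ w)
    (bound := fun w => C * ‖ψ w‖)
    Filter.univ_mem (.of_forall fun y => (integrable_comp_sub_mul φ hψ y).aestronglyMeasurable)
    (integrable_comp_sub_mul φ hψ x) (integrable_comp_sub_mul _ hψ x).aestronglyMeasurable
    (.of_forall fun w y _ => ?_) (hψ.norm.const_mul C) (.of_forall fun w y _ => ?_)).2
  · rw [norm_mul]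
    exact mul_le_mul_of_nonneg_right (norm_le_seminorm ℝ _ _) (norm_nonneg _)
  · rw [derivCLM_apply]
    simpa using ((φ.hasDerivAt (y - w)).comp_sub_const y w).mul_const (ψ w)

theorem iteratedDeriv_integral_comp_sub_mul (φ : 𝓢(ℝ, ℝ)) (hψ : Integrable ψ) (k : ℕ) :
    iteratedDeriv k (fun x => ∫ w, φ (x - w) * ψ w)
      = fun x => ∫ w, iteratedDeriv k φ (x - w) * ψ w := by
  induction k generalizing φ with
  | zero => rfl
  | succ k ih =>
    have hderiv : deriv (fun x => ∫ w, φ (x - w) * ψ w)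
        = fun x => ∫ w, derivCLM ℝ ℝ φ (x - w) * ψ w :=
      funext fun x => (hasDerivAt_integral_comp_sub_mul φ hψ x).deriv
    rw [iteratedDeriv_succ', hderiv, ih, iteratedDeriv_succ', funext (derivCLM_apply ℝ φ)]

end SchwartzMap

open SchwartzMap

theorem airy_type_convolution_ode_general
    (n m : ℕ)
    (cn cm : ℝ)
    (f g : SchwartzMap ℝ ℝ)
    (hf : ∀ x : ℝ, iteratedDeriv (n - 1) (f : ℝ → ℝ) x + cn * x * f x = 0)
    (hg : ∀ x : ℝ, iteratedDeriv (m - 1) (g : ℝ → ℝ) x + cm * x * g x = 0)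
    (h : ℝ → ℝ) (hh : ∀ x : ℝ, h x = ∫ w : ℝ, f (x - w) * g w) :
    ∀ x : ℝ,
      cm * iteratedDeriv (n - 1) h x + cn * iteratedDeriv (m - 1) h x
        + cn * cm * x * h x = 0 := by
  intro x
  have hderiv_n : iteratedDeriv (n - 1) h x = ∫ w, iteratedDeriv (n - 1) f (x - w) * g w := by
    rw [funext hh, iteratedDeriv_integral_comp_sub_mul f g.integrable]
  have hderiv_m : iteratedDeriv (m - 1) h x = ∫ w, f (x - w) * iteratedDeriv (m - 1) g w := by
    rw [funext fun y => (hh y).trans (integral_comp_sub_mul_comm _ _ y),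
      iteratedDeriv_integral_comp_sub_mul g f.integrable, integral_comp_sub_mul_comm]
  have hint_m : Integrable fun w => f (x - w) * iteratedDeriv (m - 1) g w := by
    simpa only [← coe_derivCLM_iterate] using integrable_comp_sub_mul f (integrable _) x
  have hsum : cm * iteratedDeriv (n - 1) h x + cn * iteratedDeriv (m - 1) h x
      = -(cn * cm * x) * h x := by
    rw [hderiv_n, hderiv_m, hh, ← integral_const_mul, ← integral_const_mul, ← integral_const_mul,
      ← integral_add ((integrable_iteratedDeriv_comp_sub_mul f g.integrable _ x).const_mul _)
        (hint_m.const_mul _)]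
    congr 1 with w
    rw [eq_sub_of_add_eq (hf (x - w)), eq_sub_of_add_eq (hg w)]
    ring
  rw [hsum]
  ring

theorem airy_type_convolution_ode
    (n m : ℕ) (hn : 2 ≤ n) (hm : 2 ≤ m)
    (cn cm : ℝ) (hcn : cn ≠ 0) (hcm : cm ≠ 0)
    (f g : SchwartzMap ℝ ℝ)
    (hf : ∀ x : ℝ, iteratedDeriv (n - 1) (f : ℝ → ℝ) x + cn * x * f x = 0)
    (hg : ∀ x : ℝ, iteratedDeriv (m - 1) (g : ℝ → ℝ) x + cm * x * g x = 0)
    (h : ℝ → ℝ) (hh : ∀ x : ℝ, h x = ∫ w : ℝ, f (x - w) * g w) :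
    ∀ x : ℝ,
      cm * iteratedDeriv (n - 1) h x + cn * iteratedDeriv (m - 1) h x
        + cn * cm * x * h x = 0 :=
  airy_type_convolution_ode_general n m cn cm f g hf hg h hh
end
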